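/- Let Q₀ ≥ 0, σ₁ be real numbers and let t₀ ≥ 10. Then for all real σ with −Q₀ ≤ σ ≤ σ₁ and all real t ≥ t₀, the principal branch of the complex logarithm satisfies |log(Q₀ + σ + it)| ≤ (1 + a₀(σ₁, Q₀, t₀))·log t, where a₀(σ₁, Q₀, t₀) = (σ₁ + Q₀)/(2t₀² log t₀) + π/(2 log t₀) + π(σ₁ + Q₀)²/(4 t₀ log² t₀). -/

import Mathlib

open Real Complex

/-- `a₀(σ, Q₀, t) = (σ+Q₀)/(2t² log t) + π/(2 log t) + π(σ+Q₀)²/(4t log² t)`. -/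
noncomputable def a₀ (σ Q₀ t : ℝ) : ℝ :=
  (σ + Q₀) / (2 * t ^ 2 * Real.log t) + Real.pi / (2 * Real.log t) +
    Real.pi * (σ + Q₀) ^ 2 / (4 * t * (Real.log t) ^ 2)

/-! For `z = x + it` with `x ≥ 0` we have `|log z| ≤ log |z| + |arg z| ≤ log |z| + π/2`, and
`log |z| = log t + ½ log (1 + x²/t²) ≤ log t + x²/(2t²)`. The two error terms `π/2` and
`x²/(2t²)` are then absorbed into `a₀ · log t` using `log t₀ ≤ log t` and `log t₀ ≤ t₀`. -/

lemma Real.log_add_le_log_add_div {a b : ℝ} (hb : 0 < b) (hab : 0 < a + b) :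
    Real.log (a + b) ≤ Real.log b + a / b := by
  have h := Real.log_le_sub_one_of_pos (div_pos hab hb)
  rw [Real.log_div hab.ne' hb.ne', add_div, div_self hb.ne'] at h
  linarith

lemma Complex.norm_log_le_log_norm_add_pi_div_two {z : ℂ} (hz : 1 ≤ ‖z‖) (hre : 0 ≤ z.re) :
    ‖log z‖ ≤ Real.log ‖z‖ + π / 2 := by
  have harg : |arg z| ≤ π / 2 := abs_arg_le_pi_div_two_iff.mpr hre
  calc ‖log z‖ ≤ |(log z).re| + |(log z).im| := norm_le_abs_re_add_abs_im _
    _ = Real.log ‖z‖ + |arg z| := by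
      rw [log_re, log_im, abs_of_nonneg (Real.log_nonneg hz)]
    _ ≤ Real.log ‖z‖ + π / 2 := by gcongr

lemma Complex.log_norm_le_log_abs_im_add_re_sq_div {z : ℂ} (him : z.im ≠ 0) :
    Real.log ‖z‖ ≤ Real.log |z.im| + z.re ^ 2 / (2 * z.im ^ 2) := by
  have him2 : 0 < z.im ^ 2 := by positivity
  have hsq : 2 * Real.log ‖z‖ = Real.log (z.re ^ 2 + z.im ^ 2) := by
    rw [show z.re ^ 2 + z.im ^ 2 = ‖z‖ ^ 2 by rw [Complex.sq_norm, normSq_apply]; ring,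
      Real.log_pow]
    norm_num
  have him_sq : 2 * Real.log |z.im| = Real.log (z.im ^ 2) := by
    rw [← sq_abs, Real.log_pow]; norm_num
  have h := Real.log_add_le_log_add_div him2 (by positivity : 0 < z.re ^ 2 + z.im ^ 2)
  have : z.re ^ 2 / (2 * z.im ^ 2) = z.re ^ 2 / z.im ^ 2 / 2 := by ring
  linarith

section Absorption

variable {t₀ t : ℝ}

lemma pi_div_two_le_div_log_mul_log (ht₀ : 1 < t₀) (ht : t₀ ≤ t) :
    π / 2 ≤ π / (2 * Real.log t₀) * Real.log t := by
  have hlog₀ : 0 < Real.log t₀ := Real.log_pos ht₀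
  have hlog : Real.log t₀ ≤ Real.log t := Real.log_le_log (by linarith) ht
  rw [div_mul_eq_mul_div, le_div_iff₀ (by positivity)]
  nlinarith [Real.pi_pos]

lemma sq_div_two_sq_le_mul_log {x s : ℝ} (hx : 0 ≤ x) (hxs : x ≤ s) (ht₀ : 1 < t₀)
    (ht : t₀ ≤ t) :
    x ^ 2 / (2 * t ^ 2) ≤ π * s ^ 2 / (4 * t₀ * Real.log t₀ ^ 2) * Real.log t := by
  have ht₀pos : 0 < t₀ := by linarith
  have hlog₀ : 0 < Real.log t₀ := Real.log_pos ht₀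
  have hlog : Real.log t₀ ≤ Real.log t := Real.log_le_log ht₀pos ht
  have hlog_le : Real.log t₀ ≤ t₀ := Real.log_le_self ht₀pos.le
  have key : 2 * Real.log t₀ ^ 2 ≤ π * t₀ * Real.log t := by
    nlinarith [Real.pi_gt_three, mul_le_mul hlog_le hlog hlog₀.le ht₀pos.le]
  calc x ^ 2 / (2 * t ^ 2) ≤ s ^ 2 / (2 * t₀ ^ 2) := by gcongr
    _ = s ^ 2 * (2 * Real.log t₀ ^ 2) / (4 * t₀ ^ 2 * Real.log t₀ ^ 2) := by
      field_simp; ring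
    _ ≤ s ^ 2 * (π * t₀ * Real.log t) / (4 * t₀ ^ 2 * Real.log t₀ ^ 2) := by gcongr
    _ = π * s ^ 2 / (4 * t₀ * Real.log t₀ ^ 2) * Real.log t := by
      field_simp

lemma add_pi_div_two_le_a₀_mul_log {x σ Q₀ : ℝ} (hx : 0 ≤ x) (hxs : x ≤ σ + Q₀)
    (ht₀ : 1 < t₀) (ht : t₀ ≤ t) :
    x ^ 2 / (2 * t ^ 2) + π / 2 ≤ a₀ σ Q₀ t₀ * Real.log t := by
  have hfirst : 0 ≤ (σ + Q₀) / (2 * t₀ ^ 2 * Real.log t₀) * Real.log t := by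
    have := Real.log_pos ht₀
    have := Real.log_pos (ht₀.trans_le ht)
    have : 0 ≤ σ + Q₀ := hx.trans hxs
    positivity
  have := pi_div_two_le_div_log_mul_log ht₀ ht
  have := sq_div_two_sq_le_mul_log hx hxs ht₀ ht
  rw [a₀, add_mul, add_mul]
  linarith

end Absorption

theorem abs_complex_log_le_general (Q₀ σ₁ t₀ : ℝ) (ht₀ : 10 ≤ t₀) :
    ∀ σ t : ℝ, -Q₀ ≤ σ → σ ≤ σ₁ → t₀ ≤ t →
      ‖Complex.log ((Q₀ : ℂ) + (σ : ℂ) + (t : ℂ) * Complex.I)‖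
        ≤ (1 + a₀ σ₁ Q₀ t₀) * Real.log t := by
  intro σ t hσ hσ₁ ht
  set z : ℂ := (Q₀ : ℂ) + (σ : ℂ) + (t : ℂ) * Complex.I
  have hre : z.re = Q₀ + σ := by simp [z]
  have him : z.im = t := by simp [z]
  have ht_pos : 0 < t := by linarith
  have hnorm : 1 ≤ ‖z‖ := by
    have := abs_im_le_norm z
    rw [him, abs_of_pos ht_pos] at this
    linarith
  have habsorb := add_pi_div_two_le_a₀_mul_log (x := Q₀ + σ) (σ := σ₁) (Q₀ := Q₀) (by linarith) (by linarith)
    (by linarith : 1 < t₀) ht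
  calc ‖log z‖ ≤ Real.log ‖z‖ + π / 2 := norm_log_le_log_norm_add_pi_div_two hnorm (by linarith)
    _ ≤ Real.log t + (Q₀ + σ) ^ 2 / (2 * t ^ 2) + π / 2 := by
      have := log_norm_le_log_abs_im_add_re_sq_div (z := z) (by rw [him]; exact ht_pos.ne')
      rw [hre, him, abs_of_pos ht_pos] at this
      linarith
    _ ≤ (1 + a₀ σ₁ Q₀ t₀) * Real.log t := by linarith

theorem abs_complex_log_le (Q₀ σ₁ t₀ : ℝ) (hQ₀ : 0 ≤ Q₀) (ht₀ : 10 ≤ t₀) :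
    ∀ σ t : ℝ, -Q₀ ≤ σ → σ ≤ σ₁ → t₀ ≤ t →
      ‖Complex.log ((Q₀ : ℂ) + (σ : ℂ) + (t : ℂ) * Complex.I)‖
        ≤ (1 + a₀ σ₁ Q₀ t₀) * Real.log t :=
  abs_complex_log_le_general Q₀ σ₁ t₀ ht₀
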